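/- Let ψ : ℝ → ℝ be an infinitely differentiable function with ψ(θ) = 0 for |θ| ≤ 1, 0 ≤ ψ(θ) ≤ 1 for 1 ≤ |θ| ≤ 2, and ψ(θ) = 1 for |θ| ≥ 2. For ε ∈ (0,π/2] define z_n^ε = (1/2π) ∫_{−π}^{π} e^{inθ} (1 − ψ(θ/ε)) dθ for n ∈ ℤ. Then there exists a constant C > 0, depending only on ψ, such that for all ε ∈ (0,π/2]: |z_n^ε − z_{n−1}^ε| ≤ C ε² for every n ∈ ℤ, and |z_n^ε − z_{n−1}^ε| ≤ C/n² for every n ∈ ℤ with n ≠ 0. -/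

import Mathlib

open MeasureTheory Filter Set

/-- The `n`-th Fourier coefficient of `θ ↦ 1 − ψ(θ/ε)`:
`z_n^ε = (1/2π) ∫_{−π}^{π} e^{inθ} (1 − ψ(θ/ε)) dθ`. -/
noncomputable def zCoeff (ψ : ℝ → ℝ) (ε : ℝ) (n : ℤ) : ℂ :=
  (1 / (2 * Real.pi)) *
    ∫ θ in (-Real.pi)..Real.pi, Complex.exp (Complex.I * n * θ) * ((1 - ψ (θ / ε) : ℝ) : ℂ)

/-!
With `φ = 1 − ψ`, the difference `z_n^ε − z_{n−1}^ε` is the `n`-th Fourier coefficient of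
`g(θ) = (1 − e^{−iθ}) φ(θ/ε)`, which vanishes for `|θ| ≥ 2ε`, in particular at `±π`.
On its support `|1 − e^{−iθ}| ≤ |θ| ≤ 2ε`, so `|g| = O(ε)` on an interval of length `4ε`: this
is the `ε²` bound. Integrating by parts twice, with no boundary terms, gains the factor `1/n²`,
and `|g''| = O(1 + 1/ε)` on the same interval keeps the integral bounded independently of `ε`.
-/

open Complex

theorem deriv_eq_zero_of_forall_abs_ge {E : Type*} [NormedAddCommGroup E] [NormedSpace ℝ E]
    {f : ℝ → E} {R : ℝ} {c : E} (hf : ∀ x, R ≤ |x| → f x = c) {x : ℝ} (hx : R ≤ |x|) :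
    deriv f x = 0 := by
  apply deriv_zero_of_frequently_const (c := c)
  rcases le_or_gt 0 x with hx0 | hx0
  · refine Frequently.filter_mono (Eventually.frequently ?_) (nhdsGT_le_nhdsNE x)
    filter_upwards [self_mem_nhdsWithin] with y (hy : x < y)
    exact hf y (by rw [abs_of_nonneg hx0] at hx; linarith [le_abs_self y])
  · refine Frequently.filter_mono (Eventually.frequently ?_) (nhdsLT_le_nhdsNE x)
    filter_upwards [self_mem_nhdsWithin] with y (hy : y < x)
    exact hf y (by rw [abs_of_neg hx0] at hx; linarith [neg_le_abs y])

theorem exists_bound_of_forall_abs_ge {E : Type*} [NormedAddCommGroup E] {f : ℝ → E} {R : ℝ}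
    (hf : Continuous f) (h : ∀ x, R ≤ |x| → f x = 0) : ∃ M, ∀ x, ‖f x‖ ≤ M :=
  hf.bounded_above_of_compact_support <| HasCompactSupport.intro (isCompact_Icc (a := -R) (b := R))
    fun x hx => h x <| by
      rw [mem_Icc, not_and_or, not_le, not_le] at hx
      rcases hx with hx | hx <;> [linarith [neg_le_abs x]; linarith [le_abs_self x]]

theorem exists_pos_bound_of_contDiff_two {φ : ℝ → ℝ} {R : ℝ} (hφ : ContDiff ℝ 2 φ)
    (hφ0 : ∀ x, R ≤ |x| → φ x = 0) :
    ∃ M, 0 < M ∧ ∀ x, |φ x| ≤ M ∧ |deriv φ x| ≤ M ∧ |deriv (deriv φ) x| ≤ M := by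
  obtain ⟨-, -, hφ'⟩ := contDiff_succ_iff_deriv.1 (show ContDiff ℝ (1 + 1) φ from hφ)
  have hφ'0 : ∀ x, R ≤ |x| → deriv φ x = 0 := fun x => deriv_eq_zero_of_forall_abs_ge hφ0
  have hφ''0 : ∀ x, R ≤ |x| → deriv (deriv φ) x = 0 :=
    fun x => deriv_eq_zero_of_forall_abs_ge hφ'0
  obtain ⟨C, hC⟩ := exists_bound_of_forall_abs_ge (R := R)
    (f := fun x => |φ x| + |deriv φ x| + |deriv (deriv φ) x|)
    (by have := hφ.continuous; have := hφ'.continuous; have := hφ'.continuous_deriv le_rfl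
        fun_prop)
    fun x hx => by simp [hφ0 x hx, hφ'0 x hx, hφ''0 x hx]
  refine ⟨max C 1, by positivity, fun x => ?_⟩
  have hx := (le_abs_self _).trans (hC x)
  refine ⟨?_, ?_, ?_⟩ <;> refine le_max_of_le_left (le_trans ?_ hx) <;>
    linarith [abs_nonneg (φ x), abs_nonneg (deriv φ x), abs_nonneg (deriv (deriv φ) x)]

theorem comp_div_eq_zero_of_abs_ge {f : ℝ → ℝ} {R ε θ : ℝ} (hf : ∀ x, R ≤ |x| → f x = 0)
    (hε : 0 < ε) (hθ : R * ε ≤ |θ|) : f (θ / ε) = 0 :=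
  hf _ (by rwa [abs_div, abs_of_pos hε, le_div_iff₀ hε])

theorem norm_intervalIntegral_le_of_forall_abs_ge {E : Type*} [NormedAddCommGroup E]
    [NormedSpace ℝ E] {f : ℝ → E} {a b r K : ℝ} (hf : IntervalIntegrable f volume a b)
    (hr : 0 ≤ r) (ha : a ≤ -r) (hb : r ≤ b) (hzero : ∀ x, r ≤ |x| → f x = 0)
    (hK : ∀ x, |x| ≤ r → ‖f x‖ ≤ K) :
    ‖∫ x in a..b, f x‖ ≤ 2 * r * K := by
  have h_left : ∫ x in a..-r, f x = 0 :=
    intervalIntegral.integral_zero_ae <| ae_of_all _ fun x hx => hzero x <| by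
      rw [uIoc_of_le ha] at hx; linarith [neg_le_abs x, hx.2]
  have h_right : ∫ x in r..b, f x = 0 :=
    intervalIntegral.integral_zero_ae <| ae_of_all _ fun x hx => hzero x <| by
      rw [uIoc_of_le hb] at hx; linarith [le_abs_self x, hx.1]
  rw [← intervalIntegral.integral_add_adjacent_intervals (b := -r) (hf.mono_set ?_)
      (hf.mono_set ?_),
    ← intervalIntegral.integral_add_adjacent_intervals (a := -r) (b := r) (hf.mono_set ?_)
      (hf.mono_set ?_),
    h_left, h_right, zero_add, add_zero]
  · calc ‖∫ x in -r..r, f x‖ ≤ K * |r - -r| :=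
          intervalIntegral.norm_integral_le_of_norm_le_const fun x hx => hK x <| by
            rw [uIoc_of_le (by linarith)] at hx; exact abs_le.2 ⟨hx.1.le, hx.2⟩
      _ = 2 * r * K := by rw [abs_of_nonneg (by linarith)]; ring
  all_goals (rw [uIcc_of_le (by linarith), uIcc_of_le (by linarith)]; gcongr <;> linarith)

theorem integral_exp_mul_mul_eq_neg_div {a b : ℝ} {c : ℂ} (hc : c ≠ 0) {G G' : ℝ → ℂ}
    (hG : ∀ x ∈ uIcc a b, HasDerivAt G (G' x) x) (hG' : IntervalIntegrable G' volume a b)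
    (ha : G a = 0) (hb : G b = 0) :
    ∫ x in a..b, exp (c * x) * G x = -(∫ x in a..b, exp (c * x) * G' x) / c := by
  have hexp : ∀ x : ℝ, HasDerivAt (fun y : ℝ => exp (c * y) / c) (exp (c * x)) x := fun x => by
    simpa [hc] using (((hasDerivAt_id (x : ℂ)).const_mul c).cexp.comp_ofReal).div_const c
  have hibp := intervalIntegral.integral_mul_deriv_eq_deriv_mul (fun x _ => hexp x) hG
    ((by fun_prop : Continuous fun x : ℝ => exp (c * x)).intervalIntegrable a b) hG'
  simp only [ha, hb, mul_zero, sub_zero, zero_sub, div_mul_eq_mul_div,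
    intervalIntegral.integral_div] at hibp
  rw [neg_div, hibp, neg_neg]

theorem integral_exp_mul_mul_eq_div_sq {a b : ℝ} {c : ℂ} (hc : c ≠ 0) {G G' G'' : ℝ → ℂ}
    (hG : ∀ x ∈ uIcc a b, HasDerivAt G (G' x) x) (hG' : ∀ x ∈ uIcc a b, HasDerivAt G' (G'' x) x)
    (hG'' : IntervalIntegrable G'' volume a b)
    (ha : G a = 0) (hb : G b = 0) (ha' : G' a = 0) (hb' : G' b = 0) :
    ∫ x in a..b, exp (c * x) * G x = (∫ x in a..b, exp (c * x) * G'' x) / c ^ 2 := by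
  have hG'_int : IntervalIntegrable G' volume a b :=
    ContinuousOn.intervalIntegrable fun x hx => (hG' x hx).continuousAt.continuousWithinAt
  rw [integral_exp_mul_mul_eq_neg_div hc hG hG'_int ha hb,
    integral_exp_mul_mul_eq_neg_div hc hG' hG'' ha' hb']
  field_simp

theorem HasDerivAt.ofReal_comp_div {f : ℝ → ℝ} {f' ε x : ℝ} (hf : HasDerivAt f f' (x / ε)) :
    HasDerivAt (fun y : ℝ => (f (y / ε) : ℂ)) ((f' / ε : ℝ) : ℂ) x := by
  simpa [div_eq_mul_inv] using (hf.comp x ((hasDerivAt_id x).div_const ε)).ofReal_comp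

theorem hasDerivAt_exp_neg_I_mul (x : ℝ) :
    HasDerivAt (fun y : ℝ => exp (-(I * y))) (-I * exp (-(I * x))) x := by
  simpa [mul_comm] using (((hasDerivAt_id (x : ℂ)).const_mul I).neg.cexp.comp_ofReal)

theorem norm_one_sub_exp_neg_I_mul_le (x : ℝ) : ‖1 - exp (-(I * x))‖ ≤ |x| := by
  simpa [norm_sub_rev, mul_comm] using Real.norm_exp_I_mul_ofReal_sub_one_le (x := -x)

theorem norm_exp_I_mul_intCast_mul_ofReal (n : ℤ) (x : ℝ) : ‖exp (I * n * x)‖ = 1 := by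
  simp [norm_exp]

section DiffKernel

variable {φ : ℝ → ℝ} {M ε θ : ℝ}

noncomputable def diffKernel (φ : ℝ → ℝ) (ε θ : ℝ) : ℂ := (1 - exp (-(I * θ))) * (φ (θ / ε) : ℂ)

noncomputable def diffKernelDeriv (φ : ℝ → ℝ) (ε θ : ℝ) : ℂ :=
  I * exp (-(I * θ)) * (φ (θ / ε) : ℂ) + (1 - exp (-(I * θ))) * ((deriv φ (θ / ε) / ε : ℝ) : ℂ)

noncomputable def diffKernelDeriv2 (φ : ℝ → ℝ) (ε θ : ℝ) : ℂ :=
  exp (-(I * θ)) * (φ (θ / ε) : ℂ) + 2 * (I * exp (-(I * θ)) * ((deriv φ (θ / ε) / ε : ℝ) : ℂ)) +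
    (1 - exp (-(I * θ))) * ((deriv (deriv φ) (θ / ε) / ε / ε : ℝ) : ℂ)

theorem zCoeff_sub_zCoeff_sub_one {ψ : ℝ → ℝ} (hψ : Continuous ψ) (ε : ℝ) (n : ℤ) :
    zCoeff ψ ε n - zCoeff ψ ε (n - 1) =
      1 / (2 * Real.pi) * ∫ θ in -Real.pi..Real.pi,
        exp (I * n * θ) * diffKernel (fun x => 1 - ψ x) ε θ := by
  have hint : ∀ m : ℤ, IntervalIntegrable
      (fun θ : ℝ => exp (I * m * θ) * ((1 - ψ (θ / ε) : ℝ) : ℂ)) volume (-Real.pi) Real.pi :=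
    fun m => Continuous.intervalIntegrable (by fun_prop) _ _
  rw [zCoeff, zCoeff, ← mul_sub, ← intervalIntegral.integral_sub (hint n) (hint (n - 1))]
  congr 1
  refine intervalIntegral.integral_congr fun θ _ => ?_
  have hshift : exp (I * ((n - 1 : ℤ) : ℂ) * θ) = exp (I * n * θ) * exp (-(I * θ)) := by
    rw [← exp_add]; push_cast; ring_nf
  simp only [diffKernel, hshift]
  ring

theorem hasDerivAt_diffKernel (hφ : Differentiable ℝ φ) (θ : ℝ) :
    HasDerivAt (diffKernel φ ε) (diffKernelDeriv φ ε θ) θ := by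
  have hu : HasDerivAt (fun θ : ℝ => 1 - exp (-(I * θ))) (I * exp (-(I * θ))) θ := by
    simpa using (hasDerivAt_exp_neg_I_mul θ).const_sub 1
  exact hu.mul (hφ _).hasDerivAt.ofReal_comp_div

theorem hasDerivAt_diffKernelDeriv (hφ : Differentiable ℝ φ) (hφ' : Differentiable ℝ (deriv φ))
    (θ : ℝ) : HasDerivAt (diffKernelDeriv φ ε) (diffKernelDeriv2 φ ε θ) θ := by
  have hu : HasDerivAt (fun θ : ℝ => 1 - exp (-(I * θ))) (I * exp (-(I * θ))) θ := by
    simpa using (hasDerivAt_exp_neg_I_mul θ).const_sub 1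
  have hu' : HasDerivAt (fun θ : ℝ => I * exp (-(I * θ))) (exp (-(I * θ))) θ := by
    simpa [← mul_assoc] using (hasDerivAt_exp_neg_I_mul θ).const_mul I
  have hv := (hφ (θ / ε)).hasDerivAt.ofReal_comp_div
  have hv' := ((hφ' (θ / ε)).hasDerivAt.div_const ε).ofReal_comp_div (f := fun x => deriv φ x / ε)
  exact ((hu'.mul hv).add (hu.mul hv')).congr_deriv (by simp only [diffKernelDeriv2]; ring)

theorem diffKernel_eq_zero_of_abs_ge (hφ0 : ∀ x, 2 ≤ |x| → φ x = 0) (hε : 0 < ε)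
    (hθ : 2 * ε ≤ |θ|) :
    diffKernel φ ε θ = 0 ∧ diffKernelDeriv φ ε θ = 0 ∧ diffKernelDeriv2 φ ε θ = 0 := by
  have hφ'0 : ∀ x, 2 ≤ |x| → deriv φ x = 0 := fun x => deriv_eq_zero_of_forall_abs_ge hφ0
  have hφ''0 : ∀ x, 2 ≤ |x| → deriv (deriv φ) x = 0 :=
    fun x => deriv_eq_zero_of_forall_abs_ge hφ'0
  simp [diffKernel, diffKernelDeriv, diffKernelDeriv2, comp_div_eq_zero_of_abs_ge hφ0 hε hθ,
    comp_div_eq_zero_of_abs_ge hφ'0 hε hθ, comp_div_eq_zero_of_abs_ge hφ''0 hε hθ]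

theorem norm_diffKernel_le (hM : ∀ x, |φ x| ≤ M) (hθ : |θ| ≤ 2 * ε) :
    ‖diffKernel φ ε θ‖ ≤ 2 * ε * M := by
  rw [diffKernel, norm_mul, norm_real, Real.norm_eq_abs]
  exact mul_le_mul ((norm_one_sub_exp_neg_I_mul_le θ).trans hθ) (hM _) (abs_nonneg _)
    ((abs_nonneg θ).trans hθ)

theorem norm_diffKernelDeriv2_le (hM : ∀ x, |φ x| ≤ M ∧ |deriv φ x| ≤ M ∧ |deriv (deriv φ) x| ≤ M)
    (hε : 0 < ε) (hθ : |θ| ≤ 2 * ε) : ‖diffKernelDeriv2 φ ε θ‖ ≤ M + 4 * M / ε := by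
  have hv : ‖(φ (θ / ε) : ℂ)‖ ≤ M := by simpa [norm_real] using (hM _).1
  have hv' : ‖((deriv φ (θ / ε) / ε : ℝ) : ℂ)‖ ≤ M / ε := by
    simpa [norm_real, abs_of_pos hε] using div_le_div_of_nonneg_right (hM _).2.1 hε.le
  have hv'' : ‖((deriv (deriv φ) (θ / ε) / ε / ε : ℝ) : ℂ)‖ ≤ M / ε / ε := by
    simpa [norm_real, abs_of_pos hε] using
      div_le_div_of_nonneg_right (div_le_div_of_nonneg_right (hM _).2.2 hε.le) hε.le
  have hu := (norm_one_sub_exp_neg_I_mul_le θ).trans hθ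
  have he : ‖exp (-(I * θ))‖ = 1 := by simp [norm_exp]
  calc ‖diffKernelDeriv2 φ ε θ‖
      ≤ ‖exp (-(I * θ))‖ * ‖(φ (θ / ε) : ℂ)‖ +
          2 * (‖I‖ * ‖exp (-(I * θ))‖ * ‖((deriv φ (θ / ε) / ε : ℝ) : ℂ)‖) +
          ‖1 - exp (-(I * θ))‖ * ‖((deriv (deriv φ) (θ / ε) / ε / ε : ℝ) : ℂ)‖ := by
        refine (norm_add₃_le ..).trans ?_
        simp only [norm_mul, Complex.norm_two, le_refl]
    _ ≤ 1 * M + 2 * (1 * 1 * (M / ε)) + 2 * ε * (M / ε / ε) := by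
        rw [he, norm_I]; gcongr
    _ = M + 4 * M / ε := by field_simp; ring

theorem norm_integral_exp_mul_diffKernel_le_sq (hφ : Continuous φ)
    (hφ0 : ∀ x, 2 ≤ |x| → φ x = 0) (hM : ∀ x, |φ x| ≤ M) (hε : 0 < ε)
    (hεπ : ε ≤ Real.pi / 2) (n : ℤ) :
    ‖∫ θ in -Real.pi..Real.pi, exp (I * n * θ) * diffKernel φ ε θ‖ ≤ 8 * M * ε ^ 2 := by
  calc _ ≤ 2 * (2 * ε) * (2 * ε * M) :=
        norm_intervalIntegral_le_of_forall_abs_ge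
          (Continuous.intervalIntegrable (by unfold diffKernel; fun_prop) _ _) (by positivity)
          (by linarith) (by linarith)
          (fun θ hθ => by rw [(diffKernel_eq_zero_of_abs_ge hφ0 hε hθ).1, mul_zero])
          fun θ hθ => by
            rw [norm_mul, norm_exp_I_mul_intCast_mul_ofReal, one_mul]
            exact norm_diffKernel_le hM hθ
    _ = 8 * M * ε ^ 2 := by ring

theorem norm_integral_exp_mul_diffKernel_le_div_sq (hφ : ContDiff ℝ 2 φ)
    (hφ0 : ∀ x, 2 ≤ |x| → φ x = 0)
    (hM : ∀ x, |φ x| ≤ M ∧ |deriv φ x| ≤ M ∧ |deriv (deriv φ) x| ≤ M) (hε : 0 < ε)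
    (hεπ : ε ≤ Real.pi / 2) {n : ℤ} (hn : n ≠ 0) :
    ‖∫ θ in -Real.pi..Real.pi, exp (I * n * θ) * diffKernel φ ε θ‖ ≤ 24 * M / n ^ 2 := by
  obtain ⟨hφ_diff, -, hφ'⟩ := contDiff_succ_iff_deriv.1 (show ContDiff ℝ (1 + 1) φ from hφ)
  have hφ'' := hφ'.continuous_deriv le_rfl
  have hcont : Continuous (diffKernelDeriv2 φ ε) := by
    have := hφ'.continuous; unfold diffKernelDeriv2; fun_prop
  have hvanish (θ : ℝ) (hθ : Real.pi ≤ |θ|) := diffKernel_eq_zero_of_abs_ge hφ0 hε (θ := θ)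
    (by linarith)
  have hπ : Real.pi ≤ |Real.pi| := le_abs_self _
  have hπ' : Real.pi ≤ |-Real.pi| := hπ.trans_eq (abs_neg _).symm
  rw [integral_exp_mul_mul_eq_div_sq (mul_ne_zero I_ne_zero (Int.cast_ne_zero.2 hn))
      (fun θ _ => hasDerivAt_diffKernel hφ_diff θ)
      (fun θ _ => hasDerivAt_diffKernelDeriv hφ_diff (hφ'.differentiable one_ne_zero) θ)
      (hcont.intervalIntegrable _ _) (hvanish _ hπ').1 (hvanish _ hπ).1 (hvanish _ hπ').2.1
      (hvanish _ hπ).2.1,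
    norm_div, norm_pow, norm_mul, norm_I, one_mul, norm_intCast, sq_abs]
  gcongr
  have hM0 : 0 ≤ M := (abs_nonneg _).trans (hM 0).1
  calc _ ≤ 2 * (2 * ε) * (M + 4 * M / ε) :=
        norm_intervalIntegral_le_of_forall_abs_ge
          (Continuous.intervalIntegrable (by fun_prop) _ _) (by positivity) (by linarith)
          (by linarith)
          (fun θ hθ => by rw [(diffKernel_eq_zero_of_abs_ge hφ0 hε hθ).2.2, mul_zero])
          fun θ hθ => by
            rw [norm_mul, norm_exp_I_mul_intCast_mul_ofReal, one_mul]
            exact norm_diffKernelDeriv2_le hM hε hθ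
    _ = 4 * ε * M + 16 * M := by field_simp; ring
    _ ≤ 24 * M := by nlinarith [Real.pi_lt_four]

end DiffKernel

theorem stmt_13_general (ψ : ℝ → ℝ) (hψ_smooth : ContDiff ℝ (⊤ : ℕ∞) ψ)
    (hψ1 : ∀ θ : ℝ, 2 ≤ |θ| → ψ θ = 1) :
    ∃ C : ℝ, 0 < C ∧ ∀ ε ∈ Set.Ioc (0 : ℝ) (Real.pi / 2),
      (∀ n : ℤ, ‖zCoeff ψ ε n - zCoeff ψ ε (n - 1)‖ ≤ C * ε ^ 2) ∧
      (∀ n : ℤ, n ≠ 0 →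
        ‖zCoeff ψ ε n - zCoeff ψ ε (n - 1)‖ ≤ C / (n : ℝ) ^ 2) := by
  have hφ : ContDiff ℝ 2 (fun x => 1 - ψ x) := contDiff_const.sub (hψ_smooth.of_le (by norm_cast))
  have hφ0 : ∀ x, 2 ≤ |x| → 1 - ψ x = 0 := fun x hx => by rw [hψ1 x hx, sub_self]
  obtain ⟨M, hM0, hM⟩ := exists_pos_bound_of_contDiff_two hφ hφ0
  have hcoeff (ε : ℝ) (n : ℤ) : ‖zCoeff ψ ε n - zCoeff ψ ε (n - 1)‖ ≤
      ‖∫ θ in -Real.pi..Real.pi, exp (I * n * θ) * diffKernel (fun x => 1 - ψ x) ε θ‖ := by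
    rw [zCoeff_sub_zCoeff_sub_one hψ_smooth.continuous, norm_mul]
    refine mul_le_of_le_one_left (norm_nonneg _) ?_
    rw [norm_div, norm_one, norm_mul, Complex.norm_two, norm_real,
      Real.norm_of_nonneg Real.pi_pos.le, div_le_one (by positivity)]
    linarith [Real.pi_gt_three]
  refine ⟨24 * M, by positivity, fun ε ⟨hε, hεπ⟩ => ⟨fun n => ?_, fun n hn => ?_⟩⟩
  · calc _ ≤ _ := hcoeff ε n
      _ ≤ 8 * M * ε ^ 2 := norm_integral_exp_mul_diffKernel_le_sq hφ.continuous hφ0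
          (fun x => (hM x).1) hε hεπ n
      _ ≤ 24 * M * ε ^ 2 := by gcongr; norm_num
  · exact (hcoeff ε n).trans (norm_integral_exp_mul_diffKernel_le_div_sq hφ hφ0 hM hε hεπ hn)

/-- **Estimates on the differences of Fourier coefficients (proof of Theorem 2.1 of
Seifert).**  Let `ψ` be a smooth cutoff with `ψ = 0` on `[−1,1]`, `0 ≤ ψ ≤ 1` on
`1 ≤ |θ| ≤ 2`, and `ψ = 1` for `|θ| ≥ 2`.  Then there is a constant `C > 0`,
depending only on `ψ`, such that for all `ε ∈ (0, π/2]`: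
`|z_n^ε − z_{n−1}^ε| ≤ C ε²` for every `n ∈ ℤ`, and
`|z_n^ε − z_{n−1}^ε| ≤ C/n²` for every `n ≠ 0`. -/
theorem stmt_13 (ψ : ℝ → ℝ) (hψ_smooth : ContDiff ℝ (⊤ : ℕ∞) ψ)
    (hψ0 : ∀ θ : ℝ, |θ| ≤ 1 → ψ θ = 0)
    (hψ01 : ∀ θ : ℝ, 1 ≤ |θ| → |θ| ≤ 2 → 0 ≤ ψ θ ∧ ψ θ ≤ 1)
    (hψ1 : ∀ θ : ℝ, 2 ≤ |θ| → ψ θ = 1) :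
    ∃ C : ℝ, 0 < C ∧ ∀ ε ∈ Set.Ioc (0 : ℝ) (Real.pi / 2),
      (∀ n : ℤ, ‖zCoeff ψ ε n - zCoeff ψ ε (n - 1)‖ ≤ C * ε ^ 2) ∧
      (∀ n : ℤ, n ≠ 0 →
        ‖zCoeff ψ ε n - zCoeff ψ ε (n - 1)‖ ≤ C / (n : ℝ) ^ 2) :=
  stmt_13_general ψ hψ_smooth hψ1
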